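/- Let κ be an infinite cardinal. If there exists a real Banach space X of density character at most κ such that every real Banach space of density character at most κ admits an isomorphic embedding into X, then there exists a connected compact Hausdorff space K of weight at most κ such that every real Banach space of density character at most κ admits an isomorphic embedding into C(K, ℝ). -/
import Mathlib


open Cardinal Topology

/-- The weight of a topological space: the smallest cardinality of a base for its topology. -/
noncomputable def topWeight (X : Type u) [TopologicalSpace X] : Cardinal.{u} :=
  sInf { c | ∃ B : Set (Set X), TopologicalSpace.IsTopologicalBasis B ∧ #B = c }

/-- The density character of a topological space: the smallest cardinality of a dense subset. -/
noncomputable def densityChar (X : Type u) [TopologicalSpace X] : Cardinal.{u} :=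
  sInf { c | ∃ s : Set X, Dense s ∧ #s = c }

/-- An isomorphic embedding of Banach spaces: a bounded linear map which is bounded below. -/
def IsIsoEmbedding {Y Z : Type*} [NormedAddCommGroup Y] [NormedSpace ℝ Y]
    [NormedAddCommGroup Z] [NormedSpace ℝ Z] (T : Y →L[ℝ] Z) : Prop :=
  ∃ c : ℝ, 0 < c ∧ ∀ y : Y, c * ‖y‖ ≤ ‖T y‖

/-- There is a dense set realizing the density character. -/
lemma densityChar_attained (X : Type u) [TopologicalSpace X] :
    ∃ s : Set X, Dense s ∧ #s = densityChar X := by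
  have hne : { c | ∃ s : Set X, Dense s ∧ #s = c }.Nonempty :=
    ⟨#(Set.univ : Set X), Set.univ, dense_univ, rfl⟩
  exact csInf_mem hne

/-- If a space embeds (topologically) into a product of `κ`-many copies of `ℝ`, then its
weight is at most `κ` (for infinite `κ`). -/
lemma topWeight_le_of_inducing_pi {ι : Type v} (Z : Type v) [TopologicalSpace Z]
    (f : Z → (ι → ℝ)) (hf : IsInducing f) (κ : Cardinal.{v}) (hκ : ℵ₀ ≤ κ)
    (hι : #ι ≤ κ) : topWeight Z ≤ κ := by
  classical
  obtain ⟨b, hbcount, -, hb⟩ := TopologicalSpace.exists_countable_basis ℝ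
  -- a nonempty member of the basis
  obtain ⟨b₀, hb₀, -, -⟩ := hb.exists_subset_of_mem_open (Set.mem_univ (0 : ℝ)) isOpen_univ
  -- the standard basis of the product topology
  set B : Set (Set (ι → ℝ)) := { S | ∃ (U : ∀ _ : ι, Set ℝ) (F : Finset ι),
      (∀ i, i ∈ F → U i ∈ b) ∧ S = (F : Set ι).pi U } with hB
  have hBbasis : TopologicalSpace.IsTopologicalBasis B :=
    isTopologicalBasis_pi fun _ => hb
  -- bound the cardinality of `B`
  have hcard : #B ≤ κ := by
    have hcount : Countable b := hbcount.to_subtype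
    set g : (Σ F : Finset ι, ({ x // x ∈ F } → b)) → Set (ι → ℝ) :=
      fun p => ((p.1 : Set ι)).pi
        (fun i => if h : i ∈ p.1 then (p.2 ⟨i, h⟩ : Set ℝ) else b₀) with hg
    have hsub : B ⊆ Set.range g := by
      rintro S ⟨U, F, hU, rfl⟩
      refine ⟨⟨F, fun i => ⟨U i.1, hU i.1 i.2⟩⟩, ?_⟩
      simp only [hg]
      apply Set.pi_congr rfl
      intro i hi
      rw [dif_pos (Finset.mem_coe.mp hi)]
    calc #B ≤ #(Set.range g) := mk_le_mk_of_subset hsub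
      _ ≤ #(Σ F : Finset ι, ({ x // x ∈ F } → b)) := mk_range_le
      _ = Cardinal.sum (fun F : Finset ι => #({ x // x ∈ F } → b)) := mk_sigma _
      _ ≤ Cardinal.sum (fun _ : Finset ι => ℵ₀) := by
          apply Cardinal.sum_le_sum
          intro F
          exact Cardinal.mk_le_aleph0
      _ = #(Finset ι) * ℵ₀ := Cardinal.sum_const' _ _
      _ ≤ κ * κ := by
          apply mul_le_mul' ?_ hκ
          cases finite_or_infinite ι with
          | inl h =>
            haveI := Fintype.ofFinite ι
            exact le_trans (le_of_lt (Cardinal.lt_aleph0_of_finite (Finset ι))) hκ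
          | inr h =>
            rw [Cardinal.mk_finset_of_infinite]
            exact hι
      _ = κ := Cardinal.mul_eq_self hκ
  -- transfer the basis to `Z`
  have hZbasis : TopologicalSpace.IsTopologicalBasis ((Set.preimage f) '' B) :=
    TopologicalSpace.IsTopologicalBasis.isInducing hf hBbasis
  have : topWeight Z ≤ #((Set.preimage f) '' B) := csInf_le' ⟨_, hZbasis, rfl⟩
  exact le_trans this (le_trans (Cardinal.mk_image_le) hcard)

/-- If there is a real Banach space `X` of density character at most `κ` into which every real
Banach space of density character at most `κ` isomorphically embeds, then there is a connected compact Hausdorff space `K` of weight at most `κ` such that every real Banach space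
of density character at most `κ` isomorphically embeds into `C(K, ℝ)`. -/
theorem stmt3 (κ : Cardinal.{u}) (hκ : ℵ₀ ≤ κ)
    (X : Type u) [NormedAddCommGroup X] [NormedSpace ℝ X] [CompleteSpace X]
    (hX : densityChar X ≤ κ)
    (huniv : ∀ (Y : Type u) [NormedAddCommGroup Y] [NormedSpace ℝ Y] [CompleteSpace Y],
      densityChar Y ≤ κ → ∃ T : Y →L[ℝ] X, IsIsoEmbedding T) :
    ∃ K : CompHaus.{u}, ConnectedSpace K ∧ topWeight K ≤ κ ∧
      ∀ (Y : Type u) [NormedAddCommGroup Y] [NormedSpace ℝ Y] [CompleteSpace Y],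
        densityChar Y ≤ κ → ∃ T : Y →L[ℝ] C(K, ℝ), IsIsoEmbedding T := by
  classical
  -- the closed unit ball of the dual with the weak-* topology
  set K' : Set (WeakDual ℝ X) :=
    WeakDual.toStrongDual ⁻¹' Metric.closedBall (0 : StrongDual ℝ X) 1 with hK'
  have hcomp : IsCompact K' := WeakDual.isCompact_closedBall (𝕜 := ℝ) 0 1
  haveI : CompactSpace K' := isCompact_iff_compactSpace.mp hcomp
  have hconv : Convex ℝ K' :=
    (convex_closedBall (0 : StrongDual ℝ X) 1).linear_preimage
      (WeakDual.toStrongDual (𝕜 := ℝ) (E := X)).toLinearMap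
  have h0K' : (0 : WeakDual ℝ X) ∈ K' := by
    simp [hK', Metric.mem_closedBall]
  have hconn : IsConnected K' := hconv.isConnected ⟨0, h0K'⟩
  haveI hconnSp : ConnectedSpace K' := Subtype.connectedSpace hconn
  -- membership gives a norm bound
  have hnorm : ∀ φ : K', ∀ x : X, ‖(φ : WeakDual ℝ X) x‖ ≤ ‖x‖ := by
    rintro ⟨φ, hφ⟩ x
    have h1 : ‖WeakDual.toStrongDual φ‖ ≤ 1 := by
      simpa [hK', Metric.mem_closedBall, dist_zero_right] using hφ
    calc ‖φ x‖ = ‖WeakDual.toStrongDual φ x‖ := rfl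
      _ ≤ ‖WeakDual.toStrongDual φ‖ * ‖x‖ := (WeakDual.toStrongDual φ).le_opNorm x
      _ ≤ 1 * ‖x‖ := by
          exact mul_le_mul_of_nonneg_right h1 (norm_nonneg x)
      _ = ‖x‖ := one_mul _
  -- the canonical map `X → C(K', ℝ)`
  have hevcont : ∀ x : X, Continuous (fun φ : K' => (φ : WeakDual ℝ X) x) :=
    fun x => (WeakDual.eval_continuous x).comp continuous_subtype_val
  let ev : X →ₗ[ℝ] C(K', ℝ) :=
    { toFun := fun x => ⟨fun φ => (φ : WeakDual ℝ X) x, hevcont x⟩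
      map_add' := by
        intro x y; ext φ; simp
      map_smul' := by
        intro c x; ext φ; simp }
  have hev_le : ∀ x : X, ‖ev x‖ ≤ 1 * ‖x‖ := by
    intro x
    rw [one_mul]
    apply ContinuousMap.norm_le _ (norm_nonneg x) |>.mpr
    intro φ
    exact hnorm φ x
  let T : X →L[ℝ] C(K', ℝ) := ev.mkContinuous 1 hev_le
  have hT_ge : ∀ x : X, ‖x‖ ≤ ‖T x‖ := by
    intro x
    obtain ⟨g, hg1, hgx⟩ := exists_dual_vector'' ℝ x
    have hgK : (WeakDual.toStrongDual.symm g : WeakDual ℝ X) ∈ K' := by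
      simp only [hK', Set.mem_preimage, Metric.mem_closedBall, dist_zero_right,
        LinearEquiv.apply_symm_apply]
      exact hg1
    have : ‖(T x) ⟨_, hgK⟩‖ ≤ ‖T x‖ := (T x).norm_coe_le_norm _
    have heq : (T x) ⟨_, hgK⟩ = g x := rfl
    rw [heq, hgx] at this
    simpa using this
  refine ⟨CompHaus.of K', hconnSp, ?_, ?_⟩
  · -- weight bound
    obtain ⟨s, hsdense, hscard⟩ := densityChar_attained X
    have hscard' : #s ≤ κ := hscard.le.trans hX
    set f : K' → (s → ℝ) := fun φ d => (φ : WeakDual ℝ X) d.1 with hf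
    have hfc : Continuous f :=
      continuous_pi fun d => (WeakDual.eval_continuous (d : X)).comp continuous_subtype_val
    have hfi : Function.Injective f := by
      rintro ⟨φ, hφ⟩ ⟨ψ, hψ⟩ h
      have heq : ∀ d : s, φ d.1 = ψ d.1 := fun d => congrFun h d
      have : (φ : X → ℝ) = (ψ : X → ℝ) := by
        apply Continuous.ext_on hsdense
          (map_continuous (WeakDual.toStrongDual φ))
          (map_continuous (WeakDual.toStrongDual ψ))
        intro x hx
        exact heq ⟨x, hx⟩
      apply Subtype.ext
      apply DFunLike.coe_injective
      exact this
    have hemb : IsInducing f := (hfc.isClosedEmbedding hfi).isInducing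
    exact topWeight_le_of_inducing_pi K' f hemb κ hκ hscard'
  · -- universality
    intro Y _ _ _ hY
    obtain ⟨S, c, hc, hS⟩ := huniv Y hY
    refine ⟨T.comp S, c, hc, fun y => ?_⟩
    calc c * ‖y‖ ≤ ‖S y‖ := hS y
      _ ≤ ‖T (S y)‖ := hT_ge (S y)
      _ = ‖(T.comp S) y‖ := rfl
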